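/- If M : [T,∞) → ℝ is differentiable, e^{-t}M(t) → 0 as t → ∞, and for all t ≥ T one has |M'(t) - M(t)| ≤ C/√t, then |M(t)| ≤ 2C/√t for all sufficiently large t ≥ T. -/

import Mathlib

open Real Filter Set Topology

/-!
With `E t = e^{-t} M t` the hypothesis reads `|E' t| ≤ C e^{-t} / √t`, and `E → 0` at infinity, so
`|E t| ≤ C ∫_t^∞ e^{-s} / √s ds ≤ C e^{-t} / √t`, i.e. `|M t| ≤ C / √t`. The integral is avoided by
comparing with `g s = -e^{-s} / √s`, whose derivative dominates `e^{-s} / √s` and which also tends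
to `0`: both `C g ± E` are then monotone with limit `0`, hence nonpositive.
-/

theorem monotoneOn_Ici_of_hasDerivAt_nonneg {f f' : ℝ → ℝ} {a : ℝ}
    (hf : ∀ s ≥ a, HasDerivAt f (f' s) s) (hf' : ∀ s ≥ a, 0 ≤ f' s) : MonotoneOn f (Ici a) := by
  refine monotoneOn_of_hasDerivWithinAt_nonneg (f' := f') (convex_Ici a)
    (fun s hs ↦ (hf s hs).continuousAt.continuousWithinAt) (fun s hs ↦ ?_) (fun s hs ↦ ?_)
  · rw [interior_Ici] at hs
    exact (hf s hs.le).hasDerivWithinAt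
  · rw [interior_Ici] at hs
    exact hf' s hs.le

theorem MonotoneOn.le_of_tendsto_atTop {α β : Type*} [LinearOrder α] [Preorder β]
    [TopologicalSpace β] [ClosedIciTopology β] {f : α → β} {a t : α} {b : β}
    (hf : MonotoneOn f (Ici a)) (hlim : Tendsto f atTop (𝓝 b)) (ht : a ≤ t) : f t ≤ b :=
  have : Nonempty α := ⟨t⟩
  ge_of_tendsto hlim <| by
    filter_upwards [eventually_ge_atTop t] with u hu using hf ht (ht.trans hu) hu

theorem abs_le_neg_of_abs_deriv_le_deriv {f f' g g' : ℝ → ℝ} {a t : ℝ}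
    (hf : ∀ s ≥ a, HasDerivAt f (f' s) s) (hg : ∀ s ≥ a, HasDerivAt g (g' s) s)
    (hfg : ∀ s ≥ a, |f' s| ≤ g' s) (hf0 : Tendsto f atTop (𝓝 0))
    (hg0 : Tendsto g atTop (𝓝 0)) (ht : a ≤ t) : |f t| ≤ -g t := by
  have hadd : g t + f t ≤ 0 := by
    refine (monotoneOn_Ici_of_hasDerivAt_nonneg (fun s hs ↦ (hg s hs).add (hf s hs))
      fun s hs ↦ ?_).le_of_tendsto_atTop
        (by simpa only [Pi.add_def, add_zero] using hg0.add hf0) ht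
    linarith [neg_abs_le (f' s), hfg s hs]
  have hsub : g t - f t ≤ 0 := by
    refine (monotoneOn_Ici_of_hasDerivAt_nonneg (fun s hs ↦ (hg s hs).sub (hf s hs))
      fun s hs ↦ ?_).le_of_tendsto_atTop
        (by simpa only [Pi.sub_def, sub_zero] using hg0.sub hf0) ht
    linarith [le_abs_self (f' s), hfg s hs]
  exact abs_le.2 ⟨by linarith, by linarith⟩

theorem hasDerivAt_exp_neg_mul {M : ℝ → ℝ} {m s : ℝ} (hM : HasDerivAt M m s) :
    HasDerivAt (fun u ↦ exp (-u) * M u) (exp (-s) * (m - M s)) s :=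
  ((hasDerivAt_neg' s).exp.mul hM).congr_deriv (by ring)

theorem hasDerivAt_neg_exp_neg_div_sqrt {s : ℝ} (hs : 0 < s) :
    HasDerivAt (fun u ↦ -(exp (-u) / √u)) (exp (-s) / √s + exp (-s) / (2 * s * √s)) s := by
  have hsqrt : √s ≠ 0 := (sqrt_pos.2 hs).ne'
  refine ((hasDerivAt_neg' s).exp.div (hasDerivAt_sqrt hs.ne') hsqrt).neg.congr_deriv ?_
  field_simp
  rw [sq_sqrt hs.le]
  ring

theorem tendsto_exp_neg_div_sqrt_atTop : Tendsto (fun u ↦ exp (-u) / √u) atTop (𝓝 0) :=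
  tendsto_exp_neg_atTop_nhds_zero.div_atTop tendsto_sqrt_atTop

theorem abs_le_div_sqrt_of_abs_deriv_sub_le {M M' : ℝ → ℝ} {a C t : ℝ} (ha : 0 < a)
    (hderiv : ∀ s ≥ a, HasDerivAt M (M' s) s)
    (hlim : Tendsto (fun s ↦ exp (-s) * M s) atTop (𝓝 0))
    (hbound : ∀ s ≥ a, |M' s - M s| ≤ C / √s) (ht : a ≤ t) : |M t| ≤ C / √t := by
  have hdom : ∀ s ≥ a, |exp (-s) * (M' s - M s)| ≤
      C * (exp (-s) / √s + exp (-s) / (2 * s * √s)) := fun s hs ↦ by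
    have hs0 := ha.trans_le hs
    rw [abs_mul, abs_of_pos (exp_pos _)]
    calc exp (-s) * |M' s - M s| ≤ exp (-s) * (C / √s) := by gcongr; exact hbound s hs
      _ ≤ exp (-s) * (C / √s) + C / √s * (exp (-s) / (2 * s)) :=
        le_add_of_nonneg_right (mul_nonneg ((abs_nonneg _).trans (hbound s hs)) (by positivity))
      _ = _ := by field_simp
  have hE : |exp (-t) * M t| ≤ C * (exp (-t) / √t) := by
    simpa [mul_neg, neg_neg] using abs_le_neg_of_abs_deriv_le_deriv
      (fun s hs ↦ hasDerivAt_exp_neg_mul (hderiv s hs))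
      (fun s hs ↦ (hasDerivAt_neg_exp_neg_div_sqrt (ha.trans_le hs)).const_mul C)
      hdom hlim (by simpa using tendsto_exp_neg_div_sqrt_atTop.neg.const_mul C) ht
  calc |M t| = exp t * |exp (-t) * M t| := by
        rw [abs_mul, abs_of_pos (exp_pos _), ← mul_assoc, ← exp_add, add_neg_cancel, exp_zero,
          one_mul]
    _ ≤ exp t * (C * (exp (-t) / √t)) := by gcongr
    _ = C / √t := by rw [exp_neg]; field_simp

theorem mass_stabilization_sqrt_rate
    (M M' : ℝ → ℝ) (T C : ℝ)
    (hderiv : ∀ t ≥ T, HasDerivAt M (M' t) t)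
    (hlim : Tendsto (fun t => Real.exp (-t) * M t) atTop (nhds 0))
    (hbound : ∀ t ≥ T, |M' t - M t| ≤ C / Real.sqrt t) :
    ∃ T' ≥ T, ∀ t ≥ T', |M t| ≤ 2 * C / Real.sqrt t := by
  refine ⟨max T 1, le_max_left T 1, fun t ht ↦ ?_⟩
  have hM : |M t| ≤ C / √t :=
    abs_le_div_sqrt_of_abs_deriv_sub_le (lt_max_of_lt_right one_pos)
      (fun s hs ↦ hderiv s (le_of_max_le_left hs)) hlim
      (fun s hs ↦ hbound s (le_of_max_le_left hs)) ht
  have hnonneg : 0 ≤ C / √t := (abs_nonneg _).trans hM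
  rw [mul_div_assoc]
  linarith
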